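/- In a normal and quasicomplemented distributive nearlattice, every prime α-ideal is a maximal ideal. -/
import Mathlib


/-- A distributive nearlattice, presented (following Araújo–Kinyon) as a
join-semilattice with top together with its canonical ternary operation
`m x y z = (x ⊔ z) ⊓_z (y ⊔ z)` (the meet taken in the principal filter `[z)`),
satisfying the Araújo–Kinyon identities.  This is equivalent to: every
principal filter is a bounded distributive lattice. -/
class DNearlattice (A : Type*) extends SemilatticeSup A, OrderTop A where
  m : A → A → A → A
  sup_eq_m : ∀ x y : A, x ⊔ y = m x x y
  m_ax2 : ∀ x y : A, m x y x = x
  m_ax3 : ∀ u w x y z : A,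
    m (m x y z) (m y (m u x z) z) w = m w w (m y (m x u z) z)
  m_ax4 : ∀ w x y z : A,
    m x (m y y z) w = m (m x y w) (m x y w) (m x z w)

variable {A : Type*} [DNearlattice A]

/-- The annihilator `a⊤ = {x | x ⊔ a = ⊤}`. -/
def ann (a : A) : Set A := {x : A | x ⊔ a = ⊤}

/-- The annihilator of a set (filter): `F⊤ = {x | ∀ f ∈ F, x ⊔ f = ⊤}`. -/
def annF (F : Set A) : Set A := {x : A | ∀ f ∈ F, x ⊔ f = ⊤}

/-- The double annihilator `a⊤⊤`. -/
def dann (a : A) : Set A := annF (ann a)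

/-- A filter: contains `⊤`, is upward closed, and is closed under existing
binary meets (greatest lower bounds). -/
def IsFil (F : Set A) : Prop :=
  ⊤ ∈ F ∧ (∀ a b : A, a ≤ b → a ∈ F → b ∈ F) ∧
    (∀ a b c : A, a ∈ F → b ∈ F → IsGLB {a, b} c → c ∈ F)

/-- The filter generated by a set: the intersection of all filters containing it. -/
def filGen (X : Set A) : Set A := ⋂₀ {F : Set A | IsFil F ∧ X ⊆ F}

/-- The join of two filters in the lattice of filters. -/
def filJoin (F G : Set A) : Set A := filGen (F ∪ G)

/-- An ideal: downward closed and closed under joins. -/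
def IsIdl (I : Set A) : Prop :=
  (∀ a b : A, a ≤ b → b ∈ I → a ∈ I) ∧ (∀ a b : A, a ∈ I → b ∈ I → a ⊔ b ∈ I)

/-- A prime ideal: a nonempty proper ideal such that whenever an existing
meet `a ∧ b` lies in it, `a` or `b` lies in it. -/
def IsPrimeIdl (P : Set A) : Prop :=
  IsIdl P ∧ P.Nonempty ∧ P ≠ Set.univ ∧
    (∀ a b c : A, IsGLB {a, b} c → c ∈ P → a ∈ P ∨ b ∈ P)

/-- A maximal ideal: a nonempty proper ideal maximal among proper ideals. -/
def IsMaxIdl (I : Set A) : Prop :=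
  IsIdl I ∧ I.Nonempty ∧ I ≠ Set.univ ∧
    (∀ J : Set A, IsIdl J → I ⊆ J → J = I ∨ J = Set.univ)

/-- A prime filter: `a ⊔ b ∈ F` implies `a ∈ F` or `b ∈ F`. -/
def IsPrimeFil (F : Set A) : Prop :=
  IsFil F ∧ ∀ a b : A, a ⊔ b ∈ F → a ∈ F ∨ b ∈ F

/-- An α-filter: a filter containing `a⊤⊤` for each of its elements `a`. -/
def IsAlphaFil (F : Set A) : Prop := IsFil F ∧ ∀ a ∈ F, dann a ⊆ F

/-- An α-ideal: an ideal `I` such that `I ∩ a⊤⊤ ≠ ∅` implies `a ∈ I`. -/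
def IsAlphaIdl (I : Set A) : Prop :=
  IsIdl I ∧ ∀ a : A, (I ∩ dann a).Nonempty → a ∈ I

/-- Quasicomplemented: every `a⊤⊤` is of the form `b⊤`. -/
def Quasicomplemented (B : Type*) [DNearlattice B] : Prop :=
  ∀ a : B, ∃ b : B, dann a = ann b

/-- Normal: `(a ⊔ b)⊤ = a⊤ ⋎ b⊤` for all `a, b`. -/
def NormalNL (B : Type*) [DNearlattice B] : Prop :=
  ∀ a b : B, ann (a ⊔ b) = filJoin (ann a) (ann b)

/-- Stone: `a⊤ ⋎ a⊤⊤ = A` for all `a`. -/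
def StoneNL (B : Type*) [DNearlattice B] : Prop :=
  ∀ a : B, filJoin (ann a) (dann a) = Set.univ



section AuxLemmas

open DNearlattice

lemma hm_sup (x y : A) : m x x y = x ⊔ y := (sup_eq_m x y).symm

lemma mL1 (u x y z : A) : m y (m x u z) z ≤ m x y z := by
  have h := m_ax3 u (m x y z) x y z
  rw [m_ax2, ← sup_eq_m] at h
  exact le_sup_right.trans h.ge

lemma mL6 (x z : A) : m x z z = z := by
  have h1 : m x z z ≤ z := by
    have h := mL1 z z x z
    rw [← sup_eq_m, sup_idem, m_ax2] at h
    exact h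
  have h2 : z ≤ m x z z := by
    have h := m_ax3 z (m x z z) x z z
    simp only [m_ax2] at h
    rw [← sup_eq_m] at h
    exact le_sup_right.trans h.ge
  exact le_antisymm h1 h2

lemma mL7 (x y z : A) : z ≤ m x y z := by
  have h := mL1 z x y z
  rw [mL6] at h
  rw [mL6] at h
  exact h

lemma mD2 (x y z w : A) : m x (y ⊔ z) w = m x y w ⊔ m x z w := by
  have h := m_ax4 w x y z
  simp only [← sup_eq_m] at h
  exact h

lemma mL9 (x y w : A) : m x (w ⊔ y) w = m x y w := by
  rw [mD2, mL6]
  exact sup_eq_right.2 (mL7 x y w)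

lemma mComm (x y z : A) : m x y z = m y x z := by
  have key : ∀ a b c : A, m b a c ≤ m a b c := by
    intro a b c
    have h := mL1 a a b c
    rw [← sup_eq_m, sup_comm a c, mL9] at h
    exact h
  exact le_antisymm (key y x z) (key x y z)

lemma mL9' (x y w : A) : m (w ⊔ x) y w = m x y w := by
  rw [mComm (w ⊔ x) y w, mL9, mComm y x w]

lemma mD1 (x y z w : A) : m (x ⊔ y) z w = m x z w ⊔ m y z w := by
  rw [mComm (x ⊔ y) z w, mD2, mComm z x w, mComm z y w]

lemma mL13 (a z w : A) (h : z ≤ a) : m a z w = w ⊔ z := by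
  have h3 := m_ax3 z w a a z
  simp only [m_ax2, mL6] at h3
  rw [← sup_eq_m, ← sup_eq_m, sup_eq_left.mpr h] at h3
  exact h3

lemma mP2 (x y z : A) : m x y z ≤ x ⊔ z := by
  have h1 : m x (x ⊔ y) z = z ⊔ x := by
    rw [mComm]; exact mL13 (x ⊔ y) x z le_sup_left
  have h2 : m x (x ⊔ y) z = (x ⊔ z) ⊔ m x y z := by
    rw [mD2, ← sup_eq_m]
  have h3 : (x ⊔ z) ⊔ m x y z = x ⊔ z := by
    rw [← h2, h1, sup_comm z x]
  exact sup_eq_left.mp h3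

lemma mP2' (x y z : A) : m x y z ≤ y ⊔ z := by
  rw [mComm]; exact mP2 y x z

lemma myIsGLB_pair {x y c : A} (h1 : c ≤ x) (h2 : c ≤ y)
    (h3 : ∀ d, d ≤ x → d ≤ y → d ≤ c) : IsGLB ({x, y} : Set A) c := by
  constructor
  · intro b hb
    rcases hb with rfl | hb
    · exact h1
    · rcases hb with rfl; exact h2
  · intro d hd
    exact h3 d (hd (Set.mem_insert _ _)) (hd (Set.mem_insert_of_mem _ rfl))

lemma IsGLB.pair_left {x y c : A} (h : IsGLB ({x, y} : Set A) c) : c ≤ x :=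
  h.1 (Set.mem_insert _ _)

lemma IsGLB.pair_right {x y c : A} (h : IsGLB ({x, y} : Set A) c) : c ≤ y :=
  h.1 (Set.mem_insert_of_mem _ rfl)

lemma mGlb (x y z : A) : IsGLB ({x ⊔ z, y ⊔ z} : Set A) (m x y z) := by
  apply myIsGLB_pair (mP2 x y z) (mP2' x y z)
  intro c hcx hcy
  have hz1 : c ⊔ z ≤ x ⊔ z := sup_le hcx le_sup_right
  have hz2 : c ⊔ z ≤ y ⊔ z := sup_le hcy le_sup_right
  have e1 : (c ⊔ z) ⊔ y = y ⊔ z :=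
    le_antisymm (sup_le hz2 le_sup_left) (sup_le le_sup_right (le_sup_right.trans le_sup_left))
  have step1 : c ⊔ z ≤ m (c ⊔ z) y z := by
    have hB : m (c ⊔ z) ((c ⊔ z) ⊔ y) z = m (c ⊔ z) (c ⊔ z) z ⊔ m (c ⊔ z) y z :=
      mD2 _ _ _ _
    rw [e1, ← sup_eq_m, sup_assoc c z z, sup_idem] at hB
    have hA : m (c ⊔ z) (y ⊔ z) z = m (c ⊔ z) y z := by
      rw [sup_comm y z, mL9]
    rw [hA] at hB
    calc c ⊔ z ≤ (c ⊔ z) ⊔ m (c ⊔ z) y z := le_sup_left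
      _ = m (c ⊔ z) y z := hB.symm
  have step2 : m (c ⊔ z) y z ≤ m x y z := by
    have hC : m ((c ⊔ z) ⊔ x) y z = m (c ⊔ z) y z ⊔ m x y z := mD1 _ _ _ _
    have e2 : (c ⊔ z) ⊔ x = z ⊔ x :=
      le_antisymm (sup_le (hz1.trans (by rw [sup_comm])) (le_sup_right))
        (sup_le (le_sup_right.trans le_sup_left) le_sup_right)
    rw [e2, mL9'] at hC
    calc m (c ⊔ z) y z ≤ m (c ⊔ z) y z ⊔ m x y z := le_sup_left
      _ = m x y z := hC.symm
  exact le_sup_left.trans (step1.trans step2)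

lemma mDist {x y w : A} (c : A) (h : IsGLB ({x, y} : Set A) w) :
    IsGLB ({x ⊔ c, y ⊔ c} : Set A) (w ⊔ c) := by
  have hwx : w ≤ x := h.pair_left
  have hwy : w ≤ y := h.pair_right
  have hg := mGlb (x ⊔ c) (y ⊔ c) w
  rw [sup_eq_left.mpr (hwx.trans le_sup_left), sup_eq_left.mpr (hwy.trans le_sup_left)] at hg
  have hmxyw : m x y w = w := by
    have hg2 := mGlb x y w
    rw [sup_eq_left.mpr hwx, sup_eq_left.mpr hwy] at hg2
    exact (h.unique hg2).symm
  have hval : m (x ⊔ c) (y ⊔ c) w = w ⊔ c := by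
    apply le_antisymm
    · rw [mD1, mD2, mD2, hmxyw]
      have l1 : m x c w ≤ c ⊔ w := mP2' x c w
      have l2 : m c y w ≤ c ⊔ w := mP2 c y w
      have l3 : m c c w = c ⊔ w := (sup_eq_m c w).symm
      rw [l3]
      exact sup_le (sup_le le_sup_left (l1.trans (sup_comm c w).le))
        (sup_le (l2.trans (sup_comm c w).le) (sup_comm c w).le)
    · exact hg.2 (fun b hb => by
        rcases hb with rfl | hb
        · exact sup_le (hwx.trans le_sup_left) le_sup_right
        · rcases hb with rfl; exact sup_le (hwy.trans le_sup_left) le_sup_right)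
  rw [← hval]
  exact hg

lemma ann_isFil (a : A) : IsFil (ann a) := by
  refine ⟨by simp [ann], ?_, ?_⟩
  · intro b c hbc hb
    have h1 : (⊤ : A) ≤ c ⊔ a := by
      rw [← hb]; exact sup_le_sup_right hbc a
    exact le_antisymm le_top h1
  · intro x y c hx hy hglb
    have hcx : c ≤ x := hglb.pair_left
    have hcy : c ≤ y := hglb.pair_right
    have key : IsGLB ({x ⊔ a, y ⊔ a} : Set A) (c ⊔ a) := mDist a hglb
    rw [hx, hy] at key
    have : c ⊔ a = ⊤ := by
      apply le_antisymm le_top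
      exact key.2 (fun b hb => by rcases hb with rfl | hb; · exact le_rfl
                                  · rcases hb with rfl; exact le_rfl)
    exact this

lemma mem_filJoin {F G : Set A} (hF : IsFil F) (hG : IsFil G) {x : A}
    (hx : x ∈ filJoin F G) : ∃ f ∈ F, ∃ g ∈ G, IsGLB ({f, g} : Set A) x := by
  set S : Set A := {x : A | ∃ f ∈ F, ∃ g ∈ G, IsGLB ({f, g} : Set A) x} with hS
  have hSfil : IsFil S := by
    refine ⟨⟨⊤, hF.1, ⊤, hG.1, myIsGLB_pair le_rfl le_rfl (fun d h _ => h)⟩, ?_, ?_⟩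
    · rintro p q hpq ⟨f, hf, g, hg, hglb⟩
      refine ⟨f ⊔ q, hF.2.1 f (f ⊔ q) le_sup_left hf,
        g ⊔ q, hG.2.1 g (g ⊔ q) le_sup_left hg, ?_⟩
      have := mDist q hglb
      rwa [sup_eq_right.mpr hpq] at this
    · rintro p q c ⟨f1, hf1, g1, hg1, h1⟩ ⟨f2, hf2, g2, hg2, h2⟩ hglb
      have hcp : c ≤ p := hglb.pair_left
      have hcq : c ≤ q := hglb.pair_right
      have hcf1 : c ≤ f1 := hcp.trans h1.pair_left
      have hcg1 : c ≤ g1 := hcp.trans h1.pair_right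
      have hcf2 : c ≤ f2 := hcq.trans h2.pair_left
      have hcg2 : c ≤ g2 := hcq.trans h2.pair_right
      have hfglb : IsGLB ({f1, f2} : Set A) (m f1 f2 c) := by
        have := mGlb f1 f2 c
        rwa [sup_eq_left.mpr hcf1, sup_eq_left.mpr hcf2] at this
      have hgglb : IsGLB ({g1, g2} : Set A) (m g1 g2 c) := by
        have := mGlb g1 g2 c
        rwa [sup_eq_left.mpr hcg1, sup_eq_left.mpr hcg2] at this
      refine ⟨m f1 f2 c, hF.2.2 f1 f2 _ hf1 hf2 hfglb,
        m g1 g2 c, hG.2.2 g1 g2 _ hg1 hg2 hgglb, ?_⟩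
      apply myIsGLB_pair (mL7 f1 f2 c) (mL7 g1 g2 c)
      intro d hdf hdg
      have hd1 : d ≤ p := h1.2 (fun b hb => by
        rcases hb with rfl | hb
        · exact hdf.trans hfglb.pair_left
        · rcases hb with rfl; exact hdg.trans hgglb.pair_left)
      have hd2 : d ≤ q := h2.2 (fun b hb => by
        rcases hb with rfl | hb
        · exact hdf.trans hfglb.pair_right
        · rcases hb with rfl; exact hdg.trans hgglb.pair_right)
      exact hglb.2 (fun b hb => by
        rcases hb with rfl | hb
        · exact hd1
        · rcases hb with rfl; exact hd2)
  have hFS : F ⊆ S := fun p hp =>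
    ⟨p, hp, ⊤, hG.1, myIsGLB_pair le_rfl le_top (fun d h _ => h)⟩
  have hGS : G ⊆ S := fun p hp =>
    ⟨⊤, hF.1, p, hp, myIsGLB_pair le_top le_rfl (fun d _ h => h)⟩
  exact hx S ⟨hSfil, Set.union_subset hFS hGS⟩

lemma self_mem_dann (a : A) : a ∈ dann a := by
  intro f hf
  rw [sup_comm]; exact hf

end AuxLemmas

/-- In a normal and quasicomplemented distributive nearlattice, every prime
α-ideal is a maximal ideal. -/
theorem stmt6 (hn : NormalNL A) (hq : Quasicomplemented A)
    (P : Set A) (hP : IsPrimeIdl P) (hPa : IsAlphaIdl P) :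
    IsMaxIdl P := by
  obtain ⟨hPidl, hPne, hPproper, hPprime⟩ := hP
  refine ⟨hPidl, hPne, hPproper, ?_⟩
  intro J hJ hPJ
  by_cases hJP : J ⊆ P
  · exact Or.inl (Set.Subset.antisymm hJP hPJ)
  · right
    obtain ⟨a, haJ, haP⟩ := Set.not_subset.mp hJP
    obtain ⟨b, hb⟩ := hq a
    have hab : a ⊔ b = ⊤ := by
      have : a ∈ ann b := hb ▸ self_mem_dann a
      exact this
    obtain ⟨p, hp⟩ := hPne
    have hpJoin : p ∈ filJoin (ann a) (ann b) := by
      rw [← hn a b]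
      show p ⊔ (a ⊔ b) = ⊤
      rw [hab, sup_top_eq]
    obtain ⟨f, hf, g, hg, hglb⟩ := mem_filJoin (ann_isFil a) (ann_isFil b) hpJoin
    rcases hPprime f g p hglb hp with hfP | hgP
    · have htop : (⊤ : A) ∈ J := by
        have := hJ.2 a f haJ (hPJ hfP)
        rwa [sup_comm, hf] at this
      exact Set.eq_univ_of_forall (fun x => hJ.1 x ⊤ le_top htop)
    · exact absurd (hPa.2 a ⟨g, hgP, hb ▸ hg⟩) haP
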